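/- arXiv:1205.0446 — 10 statements merged into one kernel-verified Lean document; each statement's English description precedes it below -/
import Mathlib

section
/- Two Menger algebras (G;o) and (H;o') of the same rank n are isomorphic (there is a bijection ψ : G → H with ψ(x[y₁…yₙ]) = ψ(x)[ψ(y₁)…ψ(yₙ)]) if and only if their rigged binary comitants are isomorphic, i.e., there is a bijection φ : Gⁿ → Hⁿ such that φ(x̄ ∗ ȳ) = φ(x̄) ∗ φ(ȳ) for all x̄,ȳ ∈ Gⁿ, for each i ∈ {1,…,n} the i-th components of x̄ and ȳ are equal exactly when the i-th components of φ(x̄) and φ(ȳ) are equal, and x̄ is a constant vector (all components equal) exactly when φ(x̄) is a constant vector. -/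
universe u v

/-- Superassociativity of an `(n+1)`-ary operation, written `x[y₁…yₙ]`. -/
def Superassociative {G : Type*} {n : ℕ} (o : G → (Fin n → G) → G) : Prop :=
  ∀ (x : G) (y z : Fin n → G), o (o x y) z = o x (fun i => o (y i) z)

/-- The operation of the binary comitant:
`(x₁,…,xₙ) ∗ (y₁,…,yₙ) = (x₁[y₁…yₙ],…,xₙ[y₁…yₙ])`. -/
def comitantMul {G : Type*} {n : ℕ} (o : G → (Fin n → G) → G)
    (x y : Fin n → G) : Fin n → G :=
  fun i => o (x i) y

/-- Two Menger algebras of the same rank are isomorphic if and only if their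
rigged binary comitants are isomorphic. -/
theorem isomorphic_iff_rigged_comitants_isomorphic
    {G : Type u} {H : Type v} {n : ℕ} (hn : 1 ≤ n)
    (o : G → (Fin n → G) → G) (o' : H → (Fin n → H) → H)
    (hG : Superassociative o) (hH : Superassociative o') :
    (∃ ψ : G → H, Function.Bijective ψ ∧
        ∀ (x : G) (y : Fin n → G), ψ (o x y) = o' (ψ x) (fun i => ψ (y i))) ↔
      (∃ φ : (Fin n → G) → (Fin n → H), Function.Bijective φ ∧
        -- `φ` is a semigroup isomorphism of the binary comitants:
        (∀ x y : Fin n → G, φ (comitantMul o x y) = comitantMul o' (φ x) (φ y)) ∧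
        -- `φ` preserves and reflects the relations `πᵢ`:
        (∀ (i : Fin n) (x y : Fin n → G), x i = y i ↔ φ x i = φ y i) ∧
        -- `φ` preserves and reflects the diagonal (constant vectors):
        (∀ x : Fin n → G, (∃ g : G, x = fun _ => g) ↔ (∃ h : H, φ x = fun _ => h))) := by
  constructor
  · rintro ⟨ψ, hbij, hhom⟩
    refine ⟨fun x i => ψ (x i), ⟨fun x y hxy => ?_, fun z => ?_⟩, ?_, ?_, ?_⟩
    · funext i
      exact hbij.1 (congrFun hxy i)
    · refine ⟨fun i => Function.surjInv hbij.2 (z i), ?_⟩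
      funext i
      exact Function.surjInv_eq hbij.2 (z i)
    · intro x y
      funext i
      exact hhom (x i) y
    · intro i x y
      exact ⟨fun h => by simp only [h], fun h => hbij.1 h⟩
    · intro x
      constructor
      · rintro ⟨g, rfl⟩; exact ⟨ψ g, rfl⟩
      · rintro ⟨h, hh⟩
        refine ⟨x ⟨0, hn⟩, funext fun i => hbij.1 ?_⟩
        have := congrFun hh i
        have h2 := congrFun hh ⟨0, hn⟩
        simp only at this h2
        rw [this, h2]
  · rintro ⟨φ, hbij, hhom, hpi, hdiag⟩
    set i0 : Fin n := ⟨0, hn⟩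
    set ψ : G → H := fun g => φ (fun _ => g) i0 with hψ
    -- constant vectors map to constant vectors, so all components of φ (const g) agree
    have hconst : ∀ (g : G) (j : Fin n), φ (fun _ => g) j = ψ g := by
      intro g j
      obtain ⟨h, hh⟩ := (hdiag (fun _ => g)).1 ⟨g, rfl⟩
      simp [hψ, hh]
    -- key: φ x j = ψ (x j)
    have hkey : ∀ (x : Fin n → G) (j : Fin n), φ x j = ψ (x j) := by
      intro x j
      have : φ x j = φ (fun _ => x j) j := (hpi j x (fun _ => x j)).1 rfl
      rw [this, hconst]
    refine ⟨ψ, ⟨?_, ?_⟩, ?_⟩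
    · intro a b hab
      have : φ (fun _ => a) i0 = φ (fun _ => b) i0 := hab
      exact (hpi i0 (fun _ => a) (fun _ => b)).2 this
    · intro h
      obtain ⟨x, hx⟩ := hbij.2 (fun _ => h)
      refine ⟨x i0, ?_⟩
      rw [← hkey x i0, hx]
    · intro x y
      have h1 := congrFun (hhom (fun _ => x) y) i0
      simp only [comitantMul] at h1
      have h2 : ψ (o x y) = o' (φ (fun _ => x) i0) (φ y) := by
        rw [← h1, hkey (comitantMul o (fun _ => x) y) i0]; rfl
      rw [h2, hconst]
      congr 1
      funext j
      exact hkey y j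
end

section
/- A system (G;·,ε₁,…,εₙ,H), where (G;·) is a semigroup, ε₁,…,εₙ are binary relations on G and H ⊆ G, is isomorphic to the rigged binary comitant of some Menger algebra of rank n if and only if: (1) each εᵢ is a right regular equivalence relation (an equivalence such that (x,y) ∈ εᵢ implies (x·z, y·z) ∈ εᵢ), and for every (g₁,…,gₙ) ∈ Gⁿ there is exactly one g ∈ G with (gᵢ,g) ∈ εᵢ for all i ∈ {1,…,n}; and (2) H is a right ideal of (G;·) (h ∈ H and g ∈ G imply h·g ∈ H) and for each i every εᵢ-equivalence class contains exactly one element of H (Schein's theorem). -/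
universe u

/-- **Schein's theorem.** A system `(G;·,ε₁,…,εₙ,H)`, where `(G;·)` is a
semigroup, the `εᵢ` are binary relations on `G` and `H ⊆ G`, is isomorphic to
the rigged binary comitant of some Menger algebra of rank `n` if and only if
each `εᵢ` is a right regular equivalence, every vector `(g₁,…,gₙ)` determines a
unique `g` with `gᵢ εᵢ g` for all `i`, `H` is a right ideal, and every
`εᵢ`-class contains exactly one element of `H`. -/
theorem rigged_comitant_characterization {G : Type u} {n : ℕ} (hn : 1 ≤ n)
    (mul : G → G → G)
    (hassoc : ∀ x y z : G, mul (mul x y) z = mul x (mul y z))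
    (ε : Fin n → G → G → Prop) (H : Set G) :
    (∃ (M : Type u) (o : M → (Fin n → M) → M), Superassociative o ∧
        ∃ φ : G → (Fin n → M), Function.Bijective φ ∧
          (∀ x y : G, φ (mul x y) = comitantMul o (φ x) (φ y)) ∧
          (∀ (i : Fin n) (x y : G), ε i x y ↔ φ x i = φ y i) ∧
          (∀ x : G, x ∈ H ↔ ∃ a : M, φ x = fun _ => a)) ↔
      ((∀ i : Fin n, Equivalence (ε i)) ∧
        (∀ (i : Fin n) (x y z : G), ε i x y → ε i (mul x z) (mul y z)) ∧
        (∀ g : Fin n → G, ∃! x : G, ∀ i : Fin n, ε i (g i) x) ∧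
        (∀ h ∈ H, ∀ g : G, mul h g ∈ H) ∧
        (∀ (i : Fin n) (x : G), ∃! h : G, h ∈ H ∧ ε i x h)) := by
  constructor
  · rintro ⟨M, o, hsa, φ, ⟨hinj, hsurj⟩, hhom, hε, hH⟩
    refine ⟨fun i => ⟨fun x => (hε i x x).2 rfl,
        fun h => (hε _ _ _).2 ((hε _ _ _).1 h).symm,
        fun h₁ h₂ => (hε _ _ _).2 (((hε _ _ _).1 h₁).trans ((hε _ _ _).1 h₂))⟩,
      ?_, ?_, ?_, ?_⟩
    · intro i x y z h
      refine (hε _ _ _).2 ?_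
      have := congrFun (hhom x z) i
      have h2 := congrFun (hhom y z) i
      rw [this, h2]
      simp only [comitantMul, (hε _ _ _).1 h]
    · intro g
      obtain ⟨x, hx⟩ := hsurj (fun i => φ (g i) i)
      refine ⟨x, fun i => (hε _ _ _).2 (congrFun hx i).symm, ?_⟩
      intro y hy
      apply hinj
      funext i
      rw [hx]
      exact ((hε _ _ _).1 (hy i)).symm
    · intro h hh g
      obtain ⟨a, ha⟩ := (hH h).1 hh
      refine (hH _).2 ⟨o a (φ g), ?_⟩
      rw [hhom]
      funext i
      simp [comitantMul, ha]
    · intro i x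
      obtain ⟨h, hh⟩ := hsurj (fun _ => φ x i)
      refine ⟨h, ⟨(hH h).2 ⟨φ x i, hh⟩, (hε _ _ _).2 (congrFun hh i).symm⟩, ?_⟩
      rintro y ⟨hyH, hy⟩
      obtain ⟨a, ha⟩ := (hH y).1 hyH
      apply hinj
      rw [ha, hh]
      funext j
      have : a = φ x i := by
        have := (hε i x y).1 hy
        rw [ha] at this; exact this.symm
      rw [this]
  · rintro ⟨heq, hreg, huniq, hideal, hrep⟩
    classical
    -- representative of the εᵢ-class of x in H
    let r : Fin n → G → G := fun i x => (hrep i x).exists.choose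
    have hrH : ∀ i x, r i x ∈ H := fun i x => (hrep i x).exists.choose_spec.1
    have hrε : ∀ i x, ε i x (r i x) := fun i x => (hrep i x).exists.choose_spec.2
    have hrun : ∀ i x h, h ∈ H → ε i x h → h = r i x := fun i x h h1 h2 =>
      ((hrep i x).unique ⟨h1, h2⟩ ⟨hrH i x, hrε i x⟩)
    -- the unique element determined by a vector
    let ψ : (Fin n → G) → G := fun g => (huniq g).exists.choose
    have hψ : ∀ g i, ε i (g i) (ψ g) := fun g => (huniq g).exists.choose_spec
    have hψun : ∀ g x, (∀ i, ε i (g i) x) → x = ψ g := fun g x hx =>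
      (huniq g).unique hx (hψ g)
    have hrid : ∀ h ∈ H, ∀ i, r i h = h := fun h hh i =>
      (hrun i h h hh ((heq i).refl h)).symm
    refine ⟨H, fun a f => ⟨mul (a : G) (ψ (fun i => (f i : G))),
        hideal _ a.2 _⟩, ?_, fun x i => ⟨r i x, hrH i x⟩, ⟨?_, ?_⟩, ?_, ?_, ?_⟩
    · -- superassociativity
      intro x y z
      apply Subtype.ext
      show mul (mul _ _) _ = mul _ _
      rw [hassoc]
      congr 1
      apply hψun
      intro i
      show ε i (mul (y i : G) _) _
      exact hreg i _ _ _ (hψ (fun i => (y i : G)) i)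
    · -- injective
      intro x y hxy
      have : ∀ i, ε i x y := fun i => by
        have hc : r i x = r i y := congrArg Subtype.val (congrFun hxy i)
        have h := hrε i x
        rw [hc] at h
        exact (heq i).trans h ((heq i).symm (hrε i y))
      have h1 := hψun (fun _ => x) x (fun i => (heq i).refl x)
      have h2 := hψun (fun _ => x) y this
      rw [h1, h2]
    · -- surjective
      intro f
      refine ⟨ψ (fun i => (f i : G)), ?_⟩
      funext i
      apply Subtype.ext
      show r i _ = (f i : G)
      exact (hrun i _ _ (f i).2 ((heq i).symm (hψ (fun j => ((f j : G))) i))).symm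
    · -- homomorphism
      intro x y
      funext i
      apply Subtype.ext
      show r i (mul x y) = mul (r i x) (ψ _)
      have hy : ψ (fun j => ((⟨r j y, hrH j y⟩ : H) : G)) = y :=
        (hψun _ y (fun j => (heq j).symm (hrε j y))).symm
      rw [hy]
      exact (hrun i (mul x y) _ (hideal _ (hrH i x) y)
        (hreg i _ _ _ (hrε i x))).symm
    · -- ε iff
      intro i x y
      constructor
      · intro h
        apply Subtype.ext
        show r i x = r i y
        exact (hrun i y (r i x) (hrH i x) ((heq i).trans ((heq i).symm h) (hrε i x)))
      · intro h
        have : r i x = r i y := congrArg Subtype.val h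
        exact (heq i).trans (hrε i x) (this ▸ (heq i).symm (hrε i y))
    · -- H membership
      intro x
      constructor
      · intro hx
        exact ⟨⟨x, hx⟩, funext fun i => Subtype.ext (hrid x hx i)⟩
      · rintro ⟨a, ha⟩
        have hx : ∀ i, ε i x (a : G) := fun i => by
          have hc : r i x = (a : G) := congrArg Subtype.val (congrFun ha i)
          have h := hrε i x
          rwa [hc] at h
        have h1 := hψun (fun _ => (a : G)) x (fun i => (heq i).symm (hx i))
        have h2 := hψun (fun _ => (a : G)) (a : G) (fun i => (heq i).refl _)
        rw [h1, ← h2]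
        exact a.2
end

section
/- A system (G;·,p₁,…,pₙ), where (G;·) is a semigroup and p₁,…,pₙ are unary operations on G, is isomorphic to the selective binary comitant of some Menger algebra of rank n if and only if: (1) pᵢ(x)·y = pᵢ(x·y) for all i ∈ {1,…,n} and x,y ∈ G; (2) pᵢ(pⱼ(x)) = pⱼ(x) for all i,j ∈ {1,…,n} and x ∈ G; and (3) for every (x₁,…,xₙ) ∈ Gⁿ there is exactly one g ∈ G such that pᵢ(xᵢ) = pᵢ(g) for all i ∈ {1,…,n} (Schein's theorem). -/
universe u

/-- **Schein's theorem.** A system `(G;·,p₁,…,pₙ)`, where `(G;·)` is a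
semigroup and the `pᵢ` are unary operations on `G`, is isomorphic to the
selective binary comitant (with unary operations `ρᵢ(x₁,…,xₙ) = (xᵢ,…,xᵢ)`) of
some Menger algebra of rank `n` if and only if `pᵢ(x)·y = pᵢ(x·y)`,
`pᵢ ∘ pⱼ = pⱼ` and every vector `(x₁,…,xₙ)` determines a unique `g` with
`pᵢ(xᵢ) = pᵢ(g)` for all `i`. -/
theorem selective_comitant_characterization {G : Type u} {n : ℕ} (hn : 1 ≤ n)
    (mul : G → G → G)
    (hassoc : ∀ x y z : G, mul (mul x y) z = mul x (mul y z))
    (p : Fin n → G → G) :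
    (∃ (M : Type u) (o : M → (Fin n → M) → M), Superassociative o ∧
        ∃ φ : G → (Fin n → M), Function.Bijective φ ∧
          (∀ x y : G, φ (mul x y) = comitantMul o (φ x) (φ y)) ∧
          (∀ (i : Fin n) (x : G), φ (p i x) = fun _ => φ x i)) ↔
      ((∀ (i : Fin n) (x y : G), mul (p i x) y = p i (mul x y)) ∧
        (∀ (i j : Fin n) (x : G), p i (p j x) = p j x) ∧
        (∀ x : Fin n → G, ∃! g : G, ∀ i : Fin n, p i (x i) = p i g)) := by
  constructor
  · rintro ⟨M, o, hsup, φ, hbij, hmul, hp⟩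
    have hinj := hbij.1
    refine ⟨?_, ?_, ?_⟩
    · intro i x y
      apply hinj
      rw [hmul, hp i (mul x y), hmul]
      funext j
      simp [comitantMul, hp]
    · intro i j x
      apply hinj
      rw [hp i (p j x), hp j x]
    · intro x
      obtain ⟨g, hg⟩ := hbij.2 (fun i => φ (x i) i)
      refine ⟨g, ?_, ?_⟩
      · intro i
        apply hinj
        rw [hp i (x i), hp i g, hg]
      · intro g' hg'
        apply hinj
        rw [hg]
        funext i
        have := congrArg φ (hg' i)
        rw [hp i (x i), hp i g'] at this
        exact (congrFun this i).symm
  · rintro ⟨h1, h2, h3⟩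
    refine ⟨{x : G // ∀ i, p i x = x}, ?_⟩
    set M := {x : G // ∀ i, p i x = x} with hM
    let φ : G → Fin n → M := fun g i => ⟨p i g, fun j => h2 j i g⟩
    have hψ : ∀ b : Fin n → M, ∃! g : G, ∀ i, p i g = (b i).1 := by
      intro b
      obtain ⟨g, hg, hu⟩ := h3 (fun i => (b i).1)
      refine ⟨g, fun i => ((b i).2 i ▸ (hg i)).symm, fun g' hg' => hu g' ?_⟩
      intro i
      rw [(b i).2 i, hg' i]
    let ψ : (Fin n → M) → G := fun b => (hψ b).exists.choose
    have hψspec : ∀ (b : Fin n → M) (i : Fin n), p i (ψ b) = (b i).1 :=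
      fun b => (hψ b).exists.choose_spec
    have hψuniq : ∀ (b : Fin n → M) (g : G), (∀ i, p i g = (b i).1) → g = ψ b := by
      intro b g hg
      obtain ⟨g0, hg0, hu⟩ := hψ b
      rw [hu g hg, hu (ψ b) (hψspec b)]
    have hψφ : ∀ y : G, ψ (φ y) = y := by
      intro y
      exact (hψuniq (φ y) y (fun i => rfl)).symm
    let o : M → (Fin n → M) → M := fun a b =>
      ⟨mul a.1 (ψ b), fun i => by rw [← h1 i a.1 (ψ b), a.2 i]⟩
    refine ⟨o, ?_, φ, ⟨?_, ?_⟩, ?_, ?_⟩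
    · -- superassociativity
      intro x y z
      have key : ψ (fun i => o (y i) z) = mul (ψ y) (ψ z) := by
        refine (hψuniq _ _ ?_).symm
        intro i
        show p i (mul (ψ y) (ψ z)) = mul (y i).1 (ψ z)
        rw [← h1 i (ψ y) (ψ z), hψspec y i]
      apply Subtype.ext
      show mul (mul x.1 (ψ y)) (ψ z) = mul x.1 (ψ (fun i => o (y i) z))
      rw [key, hassoc]
    · -- injective
      intro a b hab
      obtain ⟨g, hg, hu⟩ := h3 (fun _ => a)
      have ha : a = g := hu a (fun i => rfl)
      have hb : b = g := hu b (fun i => congrArg Subtype.val (congrFun hab i))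
      rw [ha, hb]
    · -- surjective
      intro m
      refine ⟨ψ m, ?_⟩
      funext i
      exact Subtype.ext (hψspec m i)
    · -- multiplicative
      intro x y
      funext i
      apply Subtype.ext
      show p i (mul x y) = mul (p i x) (ψ (φ y))
      rw [hψφ y, h1 i x y]
    · -- unary operations
      intro i x
      funext j
      exact Subtype.ext (h2 j i x)
end

section
/- Let (G;o) be a Menger algebra of rank n in which every vector (g₁,…,gₙ) ∈ Gⁿ is v-regular, i.e., there exists x ∈ G such that gᵢ[x…x][g₁…gₙ] = gᵢ for each i ∈ {1,…,n}. Then the diagonal semigroup (G;·), where x·y = x[y…y], is a group if and only if G has exactly one idempotent (exactly one element g with g[g…g] = g) (Trokhimenko's theorem). -/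
universe u

/-- **Trokhimenko's theorem.** If in a Menger algebra `(G;o)` every vector is
`v`-regular, then the diagonal semigroup of `(G;o)` is a group if and only if
`(G;o)` has exactly one idempotent. -/
theorem diagonal_group_iff_unique_idempotent {G : Type u} {n : ℕ} (hn : 1 ≤ n)
    (o : G → (Fin n → G) → G) (hsa : Superassociative o)
    (hreg : ∀ g : Fin n → G, ∃ x : G,
      ∀ i : Fin n, o (o (g i) (fun _ => x)) g = g i) :
    (∃ e : G, (∀ x : G, o e (fun _ => x) = x ∧ o x (fun _ => e) = x) ∧
        (∀ x : G, ∃ y : G, o x (fun _ => y) = e ∧ o y (fun _ => x) = e)) ↔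
      (∃! g : G, o g (fun _ => g) = g) := by
  set m : G → G → G := fun a b => o a (fun _ => b) with hm
  have assoc : ∀ a b c : G, m (m a b) c = m a (m b c) := by
    intro a b c
    simpa [hm] using hsa a (fun _ => b) (fun _ => c)
  constructor
  · rintro ⟨e, he, hinv⟩
    refine ⟨e, (he e).1, ?_⟩
    intro g hg
    obtain ⟨y, hy1, hy2⟩ := hinv g
    have hgg : m g g = g := hg
    calc g = m g e := ((he g).2).symm
      _ = m g (m g y) := by rw [show m g y = e from hy1]
      _ = m (m g g) y := (assoc g g y).symm
      _ = m g y := by rw [hgg]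
      _ = e := hy1
  · rintro ⟨e, hee, huniq⟩
    have key : ∀ a : G, ∃ x : G, m (m a x) a = a := by
      intro a
      obtain ⟨x, hx⟩ := hreg (fun _ => a)
      exact ⟨x, hx ⟨0, hn⟩⟩
    have idem : ∀ a x : G, m (m a x) a = a → m a x = e ∧ m x a = e := by
      intro a x hx
      constructor
      · apply huniq
        show m (m a x) (m a x) = m a x
        calc m (m a x) (m a x) = m (m (m a x) a) x := (assoc _ a x).symm
          _ = m a x := by rw [hx]
      · apply huniq
        show m (m x a) (m x a) = m x a
        calc m (m x a) (m x a) = m (m (m x a) x) a := (assoc _ x a).symm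
          _ = m (m x (m a x)) a := by rw [assoc x a x]
          _ = m x (m (m a x) a) := assoc x (m a x) a
          _ = m x a := by rw [hx]
    refine ⟨e, ?_, ?_⟩
    · intro a
      obtain ⟨x, hx⟩ := key a
      obtain ⟨h1, h2⟩ := idem a x hx
      constructor
      · show m e a = a
        calc m e a = m (m a x) a := by rw [h1]
          _ = a := hx
      · show m a e = a
        calc m a e = m a (m x a) := by rw [h2]
          _ = m (m a x) a := (assoc a x a).symm
          _ = a := hx
    · intro a
      obtain ⟨x, hx⟩ := key a
      obtain ⟨h1, h2⟩ := idem a x hx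
      exact ⟨x, h1, h2⟩
end

section
/- Let (G;o) be a finite Menger algebra of rank n and let i ∈ {1,…,n} be fixed. Then (G;o) is i-solvable if and only if it has a left diagonal unit e (an element e with e[g…g] = g for all g ∈ G) such that for all a₀,a₁,…,aₙ ∈ G there exist x,y ∈ G with x[a₁…aₙ] = e and a₀[a₁…a_{i−1} y a_{i+1}…aₙ] = e (Dudek's theorem). -/
universe u

/-- A Menger algebra of rank `n` is `i`-solvable if the equations
`x[a₁…aₙ] = b` and `a₀[a₁…a_{i-1} x a_{i+1}…aₙ] = b` have unique solutions. -/
def ISolvable {G : Type*} {n : ℕ} (o : G → (Fin n → G) → G) (i : Fin n) : Prop :=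
  (∀ (a : Fin n → G) (b : G), ∃! x : G, o x a = b) ∧
  (∀ (a₀ : G) (a : Fin n → G) (b : G), ∃! x : G, o a₀ (Function.update a i x) = b)

/-- **Dudek's theorem.** A finite Menger algebra `(G;o)` of rank `n` is
`i`-solvable if and only if it has a left diagonal unit `e` and for all
`a₀,a₁,…,aₙ ∈ G` there exist `x,y ∈ G` such that
`x[a₁…aₙ] = a₀[a₁…a_{i-1} y a_{i+1}…aₙ] = e`. -/
theorem dudek_finite_i_solvable {G : Type u} [Finite G] [Nonempty G] {n : ℕ}
    (o : G → (Fin n → G) → G) (hsa : Superassociative o) (i : Fin n) :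
    ISolvable o i ↔
      ∃ e : G, (∀ g : G, o e (fun _ => g) = g) ∧
        ∀ (a₀ : G) (a : Fin n → G),
          (∃ x : G, o x a = e) ∧ (∃ y : G, o a₀ (Function.update a i y) = e) := by
  constructor
  · rintro ⟨h1, h2⟩
    obtain ⟨g⟩ := ‹Nonempty G›
    obtain ⟨e, he, -⟩ := h1 (fun _ => g) g
    refine ⟨e, ?_, ?_⟩
    · intro a
      obtain ⟨y, hy, -⟩ := h2 g (fun _ => g) a
      have h3 := hsa e (fun _ => g) (Function.update (fun _ => g) i y)
      rw [he] at h3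
      rw [← hy]
      exact h3.symm
    · intro a₀ a
      exact ⟨(h1 a e).exists, (h2 a₀ a e).exists⟩
  · rintro ⟨e, he, hsolve⟩
    -- Step 1: the map c ↦ c[e…e] is surjective.
    have hR : ∀ b : G, ∃ c : G, o c (fun _ => e) = b := by
      intro b
      obtain ⟨x, hx⟩ := (hsolve b (fun _ => b)).1
      obtain ⟨u, hu⟩ := (hsolve b (fun _ => x)).1
      refine ⟨u, ?_⟩
      have h1 := hsa u (fun _ => x) (fun _ => b)
      simp only [hu, he, hx] at h1
      exact h1.symm
    -- Step 2: every right translation x ↦ x[a₁…aₙ] is surjective.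
    have hrho : ∀ (a : Fin n → G) (b : G), ∃ w : G, o w a = b := by
      intro a b
      obtain ⟨x, hx⟩ := (hsolve b a).1
      obtain ⟨c, hc⟩ := hR b
      refine ⟨o c (fun _ => x), ?_⟩
      have h1 := hsa c (fun _ => x) a
      simp only [hx] at h1
      rw [h1]
      exact hc
    -- Step 3: every i-translation y ↦ a₀[a₁…y…aₙ] is surjective.
    have hsig : ∀ (a₀ : G) (a : Fin n → G) (b : G),
        ∃ y : G, o a₀ (Function.update a i y) = b := by
      intro a₀ a b
      choose a' ha' using fun j => hrho (fun _ => b) (a j)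
      obtain ⟨y', hy'⟩ := (hsolve a₀ a').2
      refine ⟨o y' (fun _ => b), ?_⟩
      have h1 := hsa a₀ (Function.update a' i y') (fun _ => b)
      rw [hy', he] at h1
      have hfun : (Function.update a i (o y' (fun _ => b))) =
          fun j => o (Function.update a' i y' j) (fun _ => b) := by
        funext j
        by_cases hj : j = i
        · subst hj; simp
        · simp [Function.update_of_ne hj, ha']
      rw [hfun]
      exact h1.symm
    constructor
    · intro a b
      have hinj : Function.Injective (fun x => o x a) :=
        Finite.injective_iff_surjective.mpr (fun b => hrho a b)
      obtain ⟨x, hx⟩ := hrho a b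
      exact ⟨x, hx, fun y hy => hinj (hy.trans hx.symm)⟩
    · intro a₀ a b
      have hinj : Function.Injective (fun y => o a₀ (Function.update a i y)) :=
        Finite.injective_iff_surjective.mpr (fun b => hsig a₀ a b)
      obtain ⟨y, hy⟩ := hsig a₀ a b
      exact ⟨y, hy, fun z hz => hinj (hz.trans hy.symm)⟩
end

section
/- If a Menger algebra (G;o) of rank n is i-solvable for some i ∈ {1,…,n}, then its diagonal semigroup (G;·), where x·y = x[y…y], is a group. -/
universe u

/-- The diagonal semigroup of an `i`-solvable Menger algebra is a group. -/
theorem diagonal_of_i_solvable_is_group {G : Type u} [Nonempty G] {n : ℕ}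
    (o : G → (Fin n → G) → G) (hsa : Superassociative o)
    (i : Fin n) (hsol : ISolvable o i) :
    ∃ e : G, (∀ x : G, o e (fun _ => x) = x ∧ o x (fun _ => e) = x) ∧
      (∀ x : G, ∃ y : G, o x (fun _ => y) = e ∧ o y (fun _ => x) = e) := by
  obtain ⟨g⟩ := ‹Nonempty G›
  obtain ⟨e, he, heu⟩ := hsol.1 (fun _ => g) g
  -- right cancellation
  have cancel : ∀ a x y : G, o x (fun _ => a) = o y (fun _ => a) → x = y := by
    intro a x y hxy
    obtain ⟨z, hz, hzu⟩ := hsol.1 (fun _ => a) (o x (fun _ => a))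
    exact (hzu x rfl).trans (hzu y hxy.symm).symm
  -- associativity of the diagonal operation
  have assoc : ∀ a b c : G,
      o (o a (fun _ => b)) (fun _ => c) = o a (fun _ => o b (fun _ => c)) := by
    intro a b c
    rw [hsa]
  -- e is idempotent
  have hee : o e (fun _ => e) = e := heu _ (by show (o (o e (fun _ => e)) (fun _ => g)) = g; rw [assoc, he, he])
  -- e is a left identity
  have hleft : ∀ b : G, o e (fun _ => b) = b := by
    intro b
    obtain ⟨v, hv, -⟩ := hsol.2 e (fun _ => e) b
    have key := hsa e (fun _ => e) (Function.update (fun _ => e) i v)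
    simp only [hee] at key
    rw [hv] at key
    exact key.symm
  -- e is a right identity
  have hright : ∀ x : G, o x (fun _ => e) = x := by
    intro x
    exact cancel g _ _ (by rw [assoc, he])
  refine ⟨e, fun x => ⟨hleft x, hright x⟩, fun x => ?_⟩
  obtain ⟨y, hy, -⟩ := hsol.1 (fun _ => x) e
  refine ⟨y, ?_, hy⟩
  exact cancel x _ _ (by rw [assoc, hy, hright, hleft])
end

section
/- Let i ∈ {1,…,n} be fixed. A group (G;·) is the diagonal group of some i-solvable Menger algebra of rank n (i.e., there is a superassociative (n+1)-ary operation o on G making (G;o) i-solvable and satisfying x·y = o(x,y,…,y)) if and only if there exists an n-ary operation f : Gⁿ → G that is idempotent (f(g,…,g) = g for all g), such that for all a₁,…,aₙ,b ∈ G the equation f(a₁,…,a_{i−1},x,a_{i+1},…,aₙ) = b has a unique solution x ∈ G, and such that f(g₁,g₂,…,gₙ)·g = f(g₁·g, g₂·g, …, gₙ·g) for all g,g₁,…,gₙ ∈ G. -/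
universe u

/-- A group `(G;·)` is the diagonal group of some `i`-solvable Menger algebra
of rank `n` if and only if on `G` there is an idempotent `n`-ary operation `f`
such that `f(a₁,…,a_{i-1},x,a_{i+1},…,aₙ) = b` is uniquely solvable and
`f(g₁,…,gₙ)·g = f(g₁·g,…,gₙ·g)`. -/
theorem diagonal_group_of_i_solvable {G : Type u} [Group G] {n : ℕ} (i : Fin n) :
    (∃ o : G → (Fin n → G) → G, Superassociative o ∧ ISolvable o i ∧
        ∀ x y : G, x * y = o x (fun _ => y)) ↔
      (∃ f : (Fin n → G) → G,
        (∀ g : G, f (fun _ => g) = g) ∧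
        (∀ (a : Fin n → G) (b : G), ∃! x : G, f (Function.update a i x) = b) ∧
        (∀ (g : G) (gs : Fin n → G), f gs * g = f (fun j => gs j * g))) := by
  constructor
  · rintro ⟨o, hsup, ⟨_, hsolv2⟩, hdiag⟩
    refine ⟨fun gs => o 1 gs, ?_, ?_, ?_⟩
    · intro g
      have := hdiag 1 g
      simp at this
      exact this.symm
    · intro a b
      exact hsolv2 1 a b
    · intro g gs
      have h1 : o 1 gs * g = o (o 1 gs) (fun _ => g) := hdiag _ _
      rw [h1, hsup]
      congr 1
      funext j
      exact (hdiag (gs j) g).symm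
  · rintro ⟨f, hidem, hsolv, htrans⟩
    refine ⟨fun x gs => x * f gs, ?_, ⟨?_, ?_⟩, ?_⟩
    · intro x y z
      show x * f y * f z = x * f fun j => y j * f z
      rw [mul_assoc, htrans (f z) y]
    · intro a b
      refine ⟨b * (f a)⁻¹, by group, fun y hy => ?_⟩
      simp only at hy
      rw [← hy]; group
    · intro a₀ a b
      obtain ⟨x, hx, hux⟩ := hsolv a (a₀⁻¹ * b)
      refine ⟨x, by simp [hx], fun y hy => hux y ?_⟩
      simp only at hy
      rw [← hy]; group
    · intro x y
      simp [hidem]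
end

section
/- Let n ≥ 2. A group (G;·) with identity element e is the diagonal group of some n-solvable Menger algebra of rank n (i.e., there is a superassociative (n+1)-ary operation o on G making (G;o) n-solvable and satisfying x·y = o(x,y,…,y)) if and only if there exists an (n−1)-ary operation f : G^{n−1} → G such that f(e,…,e) = e and for all a₁,…,aₙ ∈ G the equation f(a₁·x, …, a_{n−1}·x) = aₙ·x has a unique solution x ∈ G. -/
universe u

private lemma eu_inv {G : Type*} [Group G] {P : G → Prop} (h : ∃! z : G, P z) :
    ∃! x : G, P x⁻¹ := by
  obtain ⟨z, hz, hu⟩ := h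
  refine ⟨z⁻¹, by simpa using hz, fun y hy => ?_⟩
  have := hu y⁻¹ hy
  rw [← this, inv_inv]

private def extG {G : Type*} {n : ℕ} (a : Fin (n - 1) → G) (x : G) : Fin n → G :=
  fun k => if h : (k : ℕ) < n - 1 then a ⟨k, h⟩ else x

/-- A group `(G;·)` with identity `e = 1` is the diagonal group of some
`n`-solvable Menger algebra of rank `n` if and only if on `G` there is an
`(n-1)`-ary operation `f` with `f(e,…,e) = e` such that the equation
`f(a₁·x,…,a_{n-1}·x) = aₙ·x` has a unique solution `x` for all `a₁,…,aₙ ∈ G`. -/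
theorem diagonal_group_of_n_solvable {G : Type u} [Group G] {n : ℕ} (hn : 2 ≤ n) :
    (∃ o : G → (Fin n → G) → G, Superassociative o ∧
        ISolvable o ⟨n - 1, by omega⟩ ∧
        ∀ x y : G, x * y = o x (fun _ => y)) ↔
      (∃ f : (Fin (n - 1) → G) → G,
        f (fun _ => (1 : G)) = 1 ∧
        ∀ (a : Fin (n - 1) → G) (an : G),
          ∃! x : G, f (fun j => a j * x) = an * x) := by
  have hi : n - 1 < n := by omega
  set i : Fin n := ⟨n - 1, by omega⟩ with hidef
  constructor
  · rintro ⟨o, hsa, ⟨hs1, hs2⟩, hdiag⟩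
    have hmul : ∀ (a₀ : G) (y : Fin n → G), o a₀ y = a₀ * o 1 y := by
      intro a₀ y
      have h1 : o a₀ y = o (o a₀ (fun _ => 1)) y := by rw [← hdiag, mul_one]
      rw [h1, hsa]
      exact (hdiag a₀ (o 1 y)).symm
    have heq : ∀ (y : Fin n → G) (c : G), o 1 (fun k => y k * c) = o 1 y * c := by
      intro y c
      have h1 : (fun k => y k * c) = fun k => o (y k) (fun _ => c) :=
        funext fun k => hdiag _ _
      rw [h1, ← hsa, ← hdiag]
    refine ⟨fun a => o 1 (extG a 1), ?_, ?_⟩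
    · show o 1 (extG (fun _ => (1 : G)) 1) = 1
      have h1 : extG (fun _ => (1 : G)) (1 : G) = (fun _ => (1 : G) : Fin n → G) := by
        funext k
        unfold extG
        split <;> rfl
      rw [h1, ← hdiag, one_mul]
    · intro a an
      have hE1 : ∀ x : G, extG (fun j => a j * x) (1 : G) = fun k => extG a x⁻¹ k * x := by
        intro x
        funext k
        unfold extG
        split <;> simp
      have hupd : ∀ z : G, Function.update (extG a 1) i z = extG a z := by
        intro z
        funext k
        rcases eq_or_ne k i with h | h
        · subst h
          rw [Function.update_self]
          unfold extG
          rw [dif_neg (by simp [hidef])]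
        · rw [Function.update_of_ne h]
          have hk : (k : ℕ) < n - 1 := by
            have h1 : (k : ℕ) ≠ n - 1 := fun hc => h (Fin.ext (by simp [hidef, hc]))
            have := k.isLt
            omega
          unfold extG
          rw [dif_pos hk, dif_pos hk]
      have hiff : ∀ x : G,
          o 1 (Function.update (extG a 1) i x⁻¹) = an ↔
            o 1 (extG (fun j => a j * x) 1) = an * x := by
        intro x
        rw [hupd, hE1, heq]
        exact (mul_left_inj x).symm
      exact (existsUnique_congr hiff).mp (eu_inv (hs2 1 (extG a 1) an))
  · rintro ⟨f, hf1, hf⟩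
    set c : Fin (n - 1) → Fin n := Fin.castLE (by omega) with hc
    set F : (Fin n → G) → G := fun y => f (fun j => y (c j) * (y i)⁻¹) * y i with hF
    have hFe : ∀ (y : Fin n → G) (d : G), F (fun k => y k * d) = F y * d := by
      intro y d
      rw [hF]
      simp only
      have h1 : (fun j => y (c j) * d * (y i * d)⁻¹) = fun j => y (c j) * (y i)⁻¹ := by
        funext j
        rw [mul_inv_rev]
        group
      rw [h1, ← mul_assoc]
    have hFc : ∀ y : G, F (fun _ => y) = y := by
      intro y
      rw [hF]
      simp [hf1]
    refine ⟨fun x y => x * F y, ?_, ⟨?_, ?_⟩, ?_⟩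
    · intro x y z
      simp only
      rw [hFe, mul_assoc]
    · intro a b
      refine ⟨b * (F a)⁻¹, show b * (F a)⁻¹ * F a = b by rw [inv_mul_cancel_right],
        fun y hy => ?_⟩
      exact eq_mul_inv_iff_mul_eq.mpr hy
    · intro a₀ a b
      have hupd2 : ∀ x : G,
          a₀ * F (Function.update a i x) = a₀ * (f (fun j => a (c j) * x⁻¹) * x) := by
        intro x
        congr 1
        rw [hF]
        simp only
        have h1 : Function.update a i x i = x := Function.update_self i x a
        have h2 : ∀ j : Fin (n - 1), Function.update a i x (c j) = a (c j) := by
          intro j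
          apply Function.update_of_ne
          refine Fin.ne_of_val_ne ?_
          have := j.isLt
          simp only [hc, Fin.coe_castLE, hidef]
          omega
        simp only [h1, h2]
      have hiff : ∀ x : G,
          f (fun j => a (c j) * x⁻¹) = (a₀⁻¹ * b) * x⁻¹ ↔
            a₀ * F (Function.update a i x) = b := by
        intro x
        rw [hupd2 x]
        constructor
        · intro h
          rw [h]
          group
        · intro h
          have h3 : f (fun j => a (c j) * x⁻¹) * x = a₀⁻¹ * b := by
            rw [← h]
            group
          rw [← h3]
          group
      exact (existsUnique_congr hiff).mp (eu_inv (hf (fun j => a (c j)) (a₀⁻¹ * b)))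
    · intro x y
      simp only
      rw [hFc]
end

section
/- For every odd natural number n ≥ 1 and every finite group (Γ;·) there exists a group-like Menger algebra (G;o) of rank n whose diagonal group is isomorphic to (Γ;·), i.e., there is a group isomorphism between (Γ;·) and G equipped with the operation x·y = x[y…y] (Skala's theorem). -/
universe u

lemma skala_even_succ {m : ℕ} (h : ¬ Even m) : Even (m + 1) := Nat.even_add_one.mpr h

lemma skala_not_even_succ {m : ℕ} (h : Even m) : ¬ Even (m + 1) := by
  simp [Nat.even_add_one, h]

/-- Alternating product of a list, starting with sign `s` (`true` = `+`). -/
def altF {Γ : Type u} [Group Γ] : Bool → List Γ → Γ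
  | _, [] => 1
  | s, a :: l => (cond s a a⁻¹) * altF (!s) l

lemma altF_nil {Γ : Type u} [Group Γ] (s : Bool) : altF (Γ := Γ) s [] = 1 := rfl

lemma altF_cons {Γ : Type u} [Group Γ] (s : Bool) (a : Γ) (l : List Γ) :
    altF s (a :: l) = (cond s a a⁻¹) * altF (!s) l := rfl

lemma altF_append {Γ : Type u} [Group Γ] (s : Bool) (l₁ l₂ : List Γ) :
    altF s (l₁ ++ l₂) =
      altF s l₁ * altF (if Even l₁.length then s else !s) l₂ := by
  induction l₁ generalizing s with
  | nil => simp [altF_nil]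
  | cons a l ih =>
    rw [List.cons_append, altF_cons, altF_cons, ih (!s), mul_assoc]
    congr 2
    rcases Nat.even_or_odd l.length with h | h
    · rw [if_pos h, List.length_cons, if_neg (skala_not_even_succ h)]
    · have h' : ¬ Even l.length := Nat.not_even_iff_odd.mpr h
      rw [if_neg h', List.length_cons, if_pos (skala_even_succ h'), Bool.not_not]

lemma altF_map_mul {Γ : Type u} [Group Γ] (c : Γ) (l : List Γ) :
    altF true (l.map (· * c)) = altF true l * (if Even l.length then 1 else c) ∧
    altF false (l.map (· * c)) = c⁻¹ * altF false l * (if Even l.length then c else 1) := by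
  induction l with
  | nil => simp [altF_nil]
  | cons a l ih =>
    obtain ⟨ih₁, ih₂⟩ := ih
    constructor
    · rw [List.map_cons, altF_cons, altF_cons, List.length_cons]
      simp only [Bool.not_true, cond]
      rw [ih₂]
      rcases Nat.even_or_odd l.length with h | h
      · rw [if_pos h, if_neg (skala_not_even_succ h)]; group
      · have h' : ¬ Even l.length := Nat.not_even_iff_odd.mpr h
        rw [if_neg h', if_pos (skala_even_succ h')]; group
    · rw [List.map_cons, altF_cons, altF_cons, List.length_cons]
      simp only [Bool.not_false, cond]
      rw [ih₁]
      rcases Nat.even_or_odd l.length with h | h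
      · rw [if_pos h, if_neg (skala_not_even_succ h)]; group
      · have h' : ¬ Even l.length := Nat.not_even_iff_odd.mpr h
        rw [if_neg h', if_pos (skala_even_succ h')]; group

lemma altF_replicate {Γ : Type u} [Group Γ] (s : Bool) (y : Γ) (m : ℕ) :
    altF s (List.replicate m y) = if Even m then 1 else cond s y y⁻¹ := by
  induction m generalizing s with
  | zero => simp [altF_nil]
  | succ m ih =>
    rw [List.replicate_succ, altF_cons, ih]
    rcases Nat.even_or_odd m with h | h
    · rw [if_pos h, if_neg (skala_not_even_succ h), mul_one]
    · have h' : ¬ Even m := Nat.not_even_iff_odd.mpr h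
      rw [if_neg h', if_pos (skala_even_succ h')]
      cases s <;> simp

lemma ofFn_update_eq_set {Γ : Type u} {n : ℕ} (a : Fin n → Γ) (i : Fin n) (x : Γ) :
    List.ofFn (Function.update a i x) = (List.ofFn a).set i x := by
  apply List.ext_getElem
  · simp
  · intro j h1 h2
    have hj : j < n := by simpa using h1
    rw [List.getElem_ofFn, List.getElem_set]
    rcases eq_or_ne (i : ℕ) j with h | h
    · rw [if_pos h]
      have hij : (⟨j, hj⟩ : Fin n) = i := Fin.ext h.symm
      rw [hij, Function.update_self]
    · rw [if_neg h, List.getElem_ofFn]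
      have hne' : (⟨j, hj⟩ : Fin n) ≠ i := fun hc => h (by rw [← hc])
      exact Function.update_of_ne hne' x a

/-- **Skala's theorem.** For every odd `n ≥ 1` and every finite group `Γ`
there exists a group-like Menger algebra of rank `n` whose diagonal group is
isomorphic to `Γ`. -/
theorem skala_odd_rank {Γ : Type u} [Group Γ] [Finite Γ] {n : ℕ}
    (hn1 : 1 ≤ n) (hodd : Odd n) :
    ∃ (G : Type u) (o : G → (Fin n → G) → G),
      Superassociative o ∧
      (∀ i : Fin n, ISolvable o i) ∧
      ∃ φ : Γ ≃ G, ∀ x y : Γ, φ (x * y) = o (φ x) (fun _ => φ y) := by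
  have hne : ¬ Even n := Nat.not_even_iff_odd.mpr hodd
  refine ⟨Γ, fun x y => x * altF true (List.ofFn y), ?_, ?_, Equiv.refl Γ, ?_⟩
  · -- superassociativity
    intro x y z
    set c := altF true (List.ofFn z) with hc
    show x * altF true (List.ofFn y) * c =
      x * altF true (List.ofFn (fun i => y i * c))
    have h2 : List.ofFn (fun i => y i * c) = (List.ofFn y).map (· * c) := by
      rw [List.map_ofFn]; rfl
    rw [h2, (altF_map_mul c (List.ofFn y)).1, List.length_ofFn, if_neg hne, mul_assoc]
  · -- solvability
    intro i
    constructor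
    · intro a b
      refine ⟨b * (altF true (List.ofFn a))⁻¹, ?_, fun x hx => ?_⟩
      · show b * (altF true (List.ofFn a))⁻¹ * altF true (List.ofFn a) = b
        group
      · have hx' : x * altF true (List.ofFn a) = b := hx
        exact eq_mul_inv_of_mul_eq hx'
    · intro a₀ a b
      have hi : (i : ℕ) < (List.ofFn a).length := by simp [i.isLt]
      have hsplit : ∀ x : Γ,
          List.ofFn (Function.update a i x) =
            (List.ofFn a).take i ++ x :: (List.ofFn a).drop (i + 1) := by
        intro x
        rw [ofFn_update_eq_set, List.set_eq_take_cons_drop _ hi]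
      have hlen : ((List.ofFn a).take i).length = i := by
        simp [List.length_take, i.isLt.le]
      set C := altF true ((List.ofFn a).take i) with hC
      rcases Nat.even_or_odd (i : ℕ) with h | h
      · set D := altF false ((List.ofFn a).drop (i + 1)) with hD
        have hval : ∀ x : Γ,
            a₀ * altF true (List.ofFn (Function.update a i x)) =
              a₀ * (C * (x * D)) := by
          intro x
          rw [hsplit x, altF_append, hlen, if_pos h, altF_cons]
          rfl
        refine ⟨C⁻¹ * a₀⁻¹ * b * D⁻¹, ?_, fun x hx => ?_⟩
        · show a₀ * altF true (List.ofFn (Function.update a i (C⁻¹ * a₀⁻¹ * b * D⁻¹))) = b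
          rw [hval]; group
        · have hx' : a₀ * altF true (List.ofFn (Function.update a i x)) = b := hx
          rw [hval] at hx'
          rw [← hx']; group
      · set D := altF true ((List.ofFn a).drop (i + 1)) with hD
        have h' : ¬ Even (i : ℕ) := Nat.not_even_iff_odd.mpr h
        have hval : ∀ x : Γ,
            a₀ * altF true (List.ofFn (Function.update a i x)) =
              a₀ * (C * (x⁻¹ * D)) := by
          intro x
          rw [hsplit x, altF_append, hlen, if_neg h', altF_cons]
          rfl
        refine ⟨(C⁻¹ * a₀⁻¹ * b * D⁻¹)⁻¹, ?_, fun x hx => ?_⟩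
        · show a₀ * altF true (List.ofFn (Function.update a i (C⁻¹ * a₀⁻¹ * b * D⁻¹)⁻¹)) = b
          rw [hval]; group
        · have hx' : a₀ * altF true (List.ofFn (Function.update a i x)) = b := hx
          rw [hval] at hx'
          rw [← hx']; group
  · -- diagonal group
    intro x y
    simp only [Equiv.refl_apply]
    show x * y = x * altF true (List.ofFn (fun _ : Fin n => y))
    have h : List.ofFn (fun _ : Fin n => y) = List.replicate n y := List.ofFn_const n y
    rw [h, altF_replicate, if_neg hne]
    rfl
end

section
/- For every odd prime p there is no group-like Menger algebra of rank 2 whose carrier set is finite of cardinality 2p (Skala's theorem). -/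
universe u

namespace SkalaAux

variable {G : Type u}

/-- The pair `(u, v)` as a function `Fin 2 → G`. -/
def pr (u v : G) : Fin 2 → G := fun i => if i = 0 then u else v

lemma comp_pr (o : G → (Fin 2 → G) → G) (a b : G) (z : Fin 2 → G) :
    (fun i => o (pr a b i) z) = pr (o a z) (o b z) := by
  funext i; by_cases h : i = 0 <;> simp [pr, h]

lemma upd_zero (c d x : G) : Function.update (pr c d) (0 : Fin 2) x = pr x d := by
  funext i
  by_cases h : i = 0 <;> simp [pr, Function.update_apply, h]

lemma upd_one (c d x : G) : Function.update (pr c d) (1 : Fin 2) x = pr c x := by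
  funext i
  fin_cases i <;> simp [pr, Function.update_apply]

lemma bij_of_eu {f : G → G} (h : ∀ b, ∃! x, f x = b) : Function.Bijective f := by
  constructor
  · intro x y hxy
    obtain ⟨z, _, hu⟩ := h (f y)
    rw [hu x hxy, hu y rfl]
  · intro b
    obtain ⟨x, hx, -⟩ := h b
    exact ⟨x, hx⟩

end SkalaAux

open SkalaAux

/-- **Skala's theorem.** For every odd prime `p` there is no group-like Menger
algebra of rank `2` of finite order `2p`. -/
theorem no_group_like_rank_two_order_2p {p : ℕ} (hp : p.Prime) (hodd : Odd p)
    (G : Type u) [Finite G] (hcard : Nat.card G = 2 * p)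
    (o : G → (Fin 2 → G) → G) (hsa : Superassociative o) :
    ¬ (∀ i : Fin 2, ISolvable o i) := by
  intro h
  classical
  letI : Fintype G := Fintype.ofFinite G
  have hL : ∀ (a : Fin 2 → G) (b : G), ∃! x : G, o x a = b := (h 0).1
  have hI0 := (h 0).2
  have hI1 := (h 1).2
  have hpos : 0 < Nat.card G := by
    rw [hcard]; exact Nat.mul_pos (by norm_num) hp.pos
  have hne : Nonempty G := (Nat.card_pos_iff.mp hpos).1
  obtain ⟨a⟩ := hne
  have rbij : ∀ w : Fin 2 → G, Function.Bijective (fun x => o x w) :=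
    fun w => bij_of_eu (hL w)
  -- Step 1: a two-sided "diagonal identity" e with x[e,e] = x.
  obtain ⟨e, he⟩ : ∃ e : G, ∀ x, o x (pr e e) = x := by
    set σ : Equiv.Perm G := Equiv.ofBijective _ (rbij (pr a a)) with hσ
    have key : ∀ k : ℕ, ∃ c : G, ⇑(σ ^ (k + 1)) = fun x => o x (pr c c) := by
      intro k
      induction k with
      | zero => exact ⟨a, by rw [pow_one]; rfl⟩
      | succ k ih =>
        obtain ⟨c, hc⟩ := ih
        refine ⟨o a (pr c c), ?_⟩
        funext x
        have h1 : (σ ^ (k + 1 + 1)) x = (σ ^ (k + 1)) (σ x) := by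
          rw [pow_succ]; rfl
        rw [h1, hc]
        show o (o x (pr a a)) (pr c c) = o x (pr (o a (pr c c)) (o a (pr c c)))
        rw [hsa, comp_pr]
    have hn : 0 < orderOf σ := orderOf_pos σ
    obtain ⟨c, hc⟩ := key (orderOf σ - 1)
    rw [Nat.sub_add_cancel hn, pow_orderOf_eq_one] at hc
    exact ⟨c, fun x => by simpa using (congrFun hc x).symm⟩
  -- Step 2: factorization through the diagonal multiplication.
  have assoc : ∀ x y z : G,
      o (o x (pr y y)) (pr z z) = o x (pr (o y (pr z z)) (o y (pr z z))) := by
    intro x y z; rw [hsa, comp_pr]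
  have factor : ∀ x u v : G,
      o x (pr u v) = o x (pr (o e (pr u v)) (o e (pr u v))) := by
    intro x u v
    conv_lhs => rw [← he x]
    rw [hsa, comp_pr]
  -- inverse
  have hinv : ∀ z : G, ∃! y : G, o y (pr z z) = e := fun z => hL (pr z z) e
  have inv_spec : ∀ z : G, o ((hinv z).choose) (pr z z) = e :=
    fun z => (hinv z).choose_spec.1
  -- left translations are surjective, hence injective
  have lsurj : ∀ x t : G, ∃ c : G, o x (pr c c) = t := by
    intro x t
    obtain ⟨y, hy, -⟩ := hI0 x (pr e e) t
    rw [upd_zero] at hy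
    exact ⟨o e (pr y e), by rw [← factor, hy]⟩
  have linj : ∀ x : G, Function.Injective (fun c : G => o x (pr c c)) := by
    intro x
    rw [Finite.injective_iff_surjective]
    exact fun t => lsurj x t
  have one_mul' : ∀ x : G, o e (pr x x) = x := by
    intro x
    apply linj ((hinv x).choose)
    show o ((hinv x).choose) (pr (o e (pr x x)) (o e (pr x x)))
        = o ((hinv x).choose) (pr x x)
    rw [← assoc, he]
  -- Step 3: a group structure on G.
  letI : Group G :=
    { mul := fun x y => o x (pr y y)
      one := e
      inv := fun z => (hinv z).choose
      mul_assoc := assoc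
      one_mul := one_mul'
      mul_one := he
      inv_mul_cancel := inv_spec }
  have mul_def : ∀ x y : G, x * y = o x (pr y y) := fun _ _ => rfl
  have card2p : Fintype.card G = 2 * p := by
    rw [← Nat.card_eq_fintype_card, hcard]
  -- the quasigroup q u v = e[u,v]
  set qf : G → G → G := fun u v => o e (pr u v) with hqf
  have factor' : ∀ x u v : G, o x (pr u v) = x * qf u v := factor
  have qbij1 : Function.Bijective (fun y : G => qf y e) := by
    apply bij_of_eu
    intro b
    have h1 := hI0 e (pr e e) b
    simpa [upd_zero] using h1
  have qbij2 : Function.Bijective (fun z : G => qf e z) := by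
    apply bij_of_eu
    intro b
    have h1 := hI1 e (pr e e) b
    simpa [upd_one] using h1
  have alaw : ∀ y u v : G, qf y e * qf u v = qf (y * qf u v) (qf u v) := by
    intro y u v
    calc qf y e * qf u v = o (qf y e) (pr u v) := (factor' _ _ _).symm
      _ = o e (fun i => o (pr y e i) (pr u v)) := hsa e (pr y e) (pr u v)
      _ = o e (pr (o y (pr u v)) (o e (pr u v))) := by rw [comp_pr]
      _ = qf (y * qf u v) (qf u v) := by rw [factor' y u v]
  have qmul : ∀ y w : G, qf (y * w) w = qf y e * w := by
    intro y w
    obtain ⟨v, hv⟩ := qbij2.surjective w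
    rw [← hv]
    exact (alaw y e v).symm
  have key : ∀ z : G, qf e z = qf z⁻¹ e * z := by
    intro z
    have h1 := qmul z⁻¹ z
    rwa [inv_mul_cancel] at h1
  -- Step 4: the sign homomorphism and the total product P.
  set s : G → ℤˣ := fun c => Equiv.Perm.sign (Equiv.mulRight c) with hs
  have smul : ∀ c d : G, s (c * d) = s c * s d := by
    intro c d
    have hR : Equiv.mulRight (c * d) = Equiv.mulRight d * Equiv.mulRight c :=
      Equiv.ext fun x => (mul_assoc x c d).symm
    rw [hs]
    simp only [hR, map_mul]
    exact mul_comm _ _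
  set P : ℤˣ := ∏ g : G, s g with hP
  have hP1 : ∏ z : G, s (qf e z) = P :=
    Function.Bijective.prod_comp qbij2 s
  have hP2 : ∏ z : G, s (qf z⁻¹ e) = P := by
    have hbij : Function.Bijective (fun z : G => qf z⁻¹ e) :=
      qbij1.comp (inv_involutive (G := G)).bijective
    exact Function.Bijective.prod_comp hbij s
  have hPP : P = P * P := by
    calc P = ∏ z : G, s (qf e z) := hP1.symm
      _ = ∏ z : G, (s (qf z⁻¹ e) * s z) := by
          refine Finset.prod_congr rfl fun z _ => ?_
          rw [key z, smul]
      _ = (∏ z : G, s (qf z⁻¹ e)) * ∏ z : G, s z := Finset.prod_mul_distrib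
      _ = P * P := by rw [hP2]
  have hPone : P = 1 := by
    have h6 : P * P = P * 1 := by rw [mul_one, ← hPP]
    exact mul_left_cancel h6
  -- Step 5: an element of order 2 gives an odd right translation.
  haveI : Fact (Nat.Prime 2) := ⟨Nat.prime_two⟩
  obtain ⟨τ, hτ⟩ := exists_prime_orderOf_dvd_card (G := G) 2
    (by rw [card2p]; exact Dvd.intro p rfl)
  have hτ2 : τ * τ = 1 := by
    have h1 := pow_orderOf_eq_one τ
    rwa [hτ, pow_two] at h1
  have hτ1 : τ ≠ 1 := by
    intro hh
    rw [hh, orderOf_one] at hτ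
    norm_num at hτ
  have hfree : ∀ x : G, x * τ ≠ x := by
    intro x hx
    exact hτ1 (mul_left_cancel (a := x) (by rw [hx, mul_one]))
  have hsτ : s τ = -1 := by
    set f : Equiv.Perm G := Equiv.mulRight τ with hf
    have hf2 : f ^ 2 = 1 := by
      ext x
      have : f (f x) = x := by
        simp only [hf, Equiv.coe_mulRight, mul_assoc, hτ2, mul_one]
      simpa [pow_two] using this
    have hf1 : f ≠ 1 := by
      intro hh
      have := congrFun (congrArg (fun (g : Equiv.Perm G) => (g : G → G)) hh) 1
      simp only [hf, Equiv.coe_mulRight, Equiv.Perm.coe_one, id] at this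
      exact hfree 1 this
    have horder : orderOf f = 2 := orderOf_eq_prime hf2 hf1
    have hsupp : f.support = Finset.univ := by
      rw [Finset.eq_univ_iff_forall]
      intro x
      rw [Equiv.Perm.mem_support]
      exact hfree x
    have hcyc2 : ∀ l ∈ f.cycleType, l = 2 := by
      intro l hl
      have h2 : l ∣ 2 := by
        rw [← horder, ← Equiv.Perm.lcm_cycleType]
        exact Multiset.dvd_lcm hl
      have h3 : 2 ≤ l := Equiv.Perm.two_le_of_mem_cycleType hl
      have h4 := Nat.le_of_dvd (by norm_num) h2
      omega
    have hsum : f.cycleType.sum = 2 * p := by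
      rw [Equiv.Perm.sum_cycleType, hsupp, Finset.card_univ, card2p]
    have hk : Multiset.card f.cycleType = p := by
      have hrep : f.cycleType = Multiset.replicate (Multiset.card f.cycleType) 2 :=
        Multiset.eq_replicate_card.mpr hcyc2
      rw [hrep, Multiset.sum_replicate, smul_eq_mul] at hsum
      omega
    have hsign := Equiv.Perm.sign_of_cycleType f
    rw [hsum, hk] at hsign
    have hoddexp : Odd (2 * p + p) := by
      have h5 : 2 * p + p = 3 * p := by ring
      rw [h5]
      exact (by decide : Odd 3).mul hodd
    rw [hs]
    show Equiv.Perm.sign f = -1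
    rw [hsign, Odd.neg_one_pow hoddexp]
  -- Step 6: counting gives P = (-1)^p = -1, contradiction.
  set A : Finset G := Finset.univ.filter (fun g : G => s g = 1) with hA
  set B : Finset G := Finset.univ.filter (fun g : G => ¬ s g = 1) with hB
  have hmem : ∀ g : G, s g ≠ 1 → s g = -1 := fun g hg =>
    (Int.units_eq_one_or (s g)).resolve_left hg
  have hcardAB : A.card = B.card := by
    apply Finset.card_bij' (fun g _ => g * τ) (fun g _ => g * τ)
    · intro g hg
      rw [hB, Finset.mem_filter]
      refine ⟨Finset.mem_univ _, ?_⟩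
      rw [smul, (Finset.mem_filter.mp hg).2, hsτ, one_mul]
      norm_num
    · intro g hg
      rw [hA, Finset.mem_filter]
      refine ⟨Finset.mem_univ _, ?_⟩
      rw [smul, hmem _ (Finset.mem_filter.mp hg).2, hsτ]
      norm_num
    · intro g _
      rw [mul_assoc, hτ2, mul_one]
    · intro g _
      rw [mul_assoc, hτ2, mul_one]
  have hsumcard : A.card + B.card = 2 * p := by
    rw [hA, hB, Finset.card_filter_add_card_filter_not, Finset.card_univ,
      card2p]
  have hBcard : B.card = p := by omega
  have hPval : P = (-1) ^ B.card := by
    rw [hP, ← Finset.prod_filter_mul_prod_filter_not Finset.univ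
      (fun g : G => s g = 1) s]
    have h1 : ∏ g ∈ A, s g = 1 :=
      Finset.prod_eq_one fun g hg => (Finset.mem_filter.mp hg).2
    have h2 : ∏ g ∈ B, s g = (-1) ^ B.card := by
      rw [← Finset.prod_const]
      exact Finset.prod_congr rfl fun g hg => hmem _ (Finset.mem_filter.mp hg).2
    rw [← hA, ← hB, h1, h2, one_mul]
  rw [hPone, hBcard, Odd.neg_one_pow hodd] at hPval
  have : (1 : ℤ) = -1 := congrArg Units.val hPval
  norm_num at this
end
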